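/- arXiv:1810.03112 — 3 statements merged into one kernel-verified Lean document; each statement's English description precedes it below -/
import Mathlib

section
/- Let z ∈ ℂ \ [0,∞). Then there exist constants 0 < c ≤ C < ∞ such that c ≤ |ω(x,z)| ≤ C for all x ≥ x₁(z), and |∂ω/∂x(x,z)| ≤ C(|p'(x)| + |q'(x)|) for almost every x ≥ x₁(z); consequently the function x ↦ ∂ω/∂x(x,z) is integrable on (x₁(z),∞). -/
open MeasureTheory Filter Set Complex

noncomputable section

/-- The principal-branch square root `ω(x,z) = ((q x − z)/p x)^{1/2}`. -/
def omg (p q : ℝ → ℝ) (z : ℂ) (x : ℝ) : ℂ :=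
  (((q x : ℂ) - z) / (p x : ℂ)) ^ (1 / 2 : ℂ)

/-- `Ω(x,z) = ∫₀ˣ ω(y,z) dy`. -/
def Omg (p q : ℝ → ℝ) (z : ℂ) (x : ℝ) : ℂ :=
  ∫ y in (0:ℝ)..x, omg p q z y

/-- `a(x,z) = exp(−Ω(x,z))`. -/
def aa (p q : ℝ → ℝ) (z : ℂ) (x : ℝ) : ℂ :=
  Complex.exp (-(Omg p q z x))

/-- Assumption (PQ): `p > 0` on `[0,∞)`, locally absolutely continuous with integrable
derivative `p'` and limit `p₀ > 0` at `+∞`; `q` integrable on `(0,x₀)`, locally absolutely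
continuous on `[x₀,∞)` with integrable derivative `q'` there, and `q → 0` at `+∞`.
Absolute continuity is encoded by the fundamental theorem of calculus representation. -/
structure PQData (p p' q q' : ℝ → ℝ) (p₀ x₀ : ℝ) : Prop where
  p_pos : ∀ x : ℝ, 0 ≤ x → 0 < p x
  hp₀ : 0 < p₀
  hx₀ : 0 ≤ x₀
  p_ac : ∀ x : ℝ, 0 ≤ x → p x = p 0 + ∫ t in (0:ℝ)..x, p' t
  p'_int : IntegrableOn p' (Ioi (0:ℝ))
  p_lim : Tendsto p atTop (nhds p₀)
  q_int : IntegrableOn q (Ioo (0:ℝ) x₀)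
  q_ac : ∀ x : ℝ, x₀ ≤ x → q x = q x₀ + ∫ t in x₀..x, q' t
  q'_int : IntegrableOn q' (Ioi x₀)
  q_lim : Tendsto q atTop (nhds (0:ℝ))

/-- `f` (with derivative `f'`) solves `−(p f')' + q f = z f` on `I`:
`f` is differentiable on `I` with derivative `f'`, and `p·f'` is locally absolutely
continuous on `I` with a.e. derivative `(q − z)·f` (encoded via the FTC representation). -/
def IsSol (p q : ℝ → ℝ) (z : ℂ) (I : Set ℝ) (f f' : ℝ → ℂ) : Prop :=
  (∀ x ∈ I, HasDerivWithinAt f (f' x) I x) ∧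
    ∀ x ∈ I, ∀ y ∈ I,
      (p y : ℂ) * f' y - (p x : ℂ) * f' x = ∫ t in x..y, ((q t : ℂ) - z) * f t

/-- `ε(x) = ∫ₓ^∞ (|p'| + |q'|)`. -/
def eps (p' q' : ℝ → ℝ) (x : ℝ) : ℝ :=
  ∫ y in Ioi x, (|p' y| + |q' y|)

/-- The Volterra kernel `G(x,y,z) = a(y,z)² ∫ₓ^y p(s)⁻¹ a(s,z)⁻² ds`. -/
def Gker (p q : ℝ → ℝ) (z : ℂ) (x y : ℝ) : ℂ :=
  aa p q z y ^ 2 * ∫ s in x..y, ((p s : ℂ))⁻¹ * (aa p q z s ^ 2)⁻¹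

/-- `Φ(x,λ) = ∫₀ˣ √(max((λ − q)/p, 0))`. -/
def Phi (p q : ℝ → ℝ) (lam x : ℝ) : ℝ :=
  ∫ y in (0:ℝ)..x, Real.sqrt (max ((lam - q y) / p y) 0)

/-- `K(λ) = exp(−∫₀^∞ √(max((q − λ)/p, 0)))`. -/
def Kc (p q : ℝ → ℝ) (lam : ℝ) : ℝ :=
  Real.exp (-∫ y in Ioi (0:ℝ), Real.sqrt (max ((q y - lam) / p y) 0))

/-- `ξ(x) = θ(x)·∫_ϱ^x θ(y)⁻² p(y)⁻¹ dy`. -/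
def xiFun (p : ℝ → ℝ) (θ : ℝ → ℂ) (ϱ x : ℝ) : ℂ :=
  θ x * ∫ y in ϱ..x, (θ y ^ 2)⁻¹ * ((p y : ℂ))⁻¹

/-- The derivative of `ξ`: `ξ'(x) = θ'(x)·∫_ϱ^x θ⁻² p⁻¹ + θ(x)⁻¹ p(x)⁻¹`. -/
def xiFun' (p : ℝ → ℝ) (θ θ' : ℝ → ℂ) (ϱ x : ℝ) : ℂ :=
  θ' x * (∫ y in ϱ..x, (θ y ^ 2)⁻¹ * ((p y : ℂ))⁻¹) + (θ x)⁻¹ * ((p x : ℂ))⁻¹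

/-! On `[x₁, ∞)` the coefficient `p` lies between two positive constants (it is continuous and
positive with a positive limit, and bounded by `p 0 + ∫ |p'|`), while `q x - z` lies in the annulus
`‖z‖/2 ≤ ‖·‖ ≤ 3‖z‖/2` and off the negative real axis. This pins `‖ω‖` between positive
constants, and since `ω² = (q - z)/p` stays in the slit plane the principal square root can be
differentiated: `ω' = (ω²)'/(2ω)` is at most a multiple of the integrable `|p'| + |q'|`. -/

open scoped Topology

section IntegralRepresentation

variable {g g' : ℝ → ℝ} {a : ℝ}

lemma eq_add_integral_indicator_Ioi (hg : ∀ x : ℝ, a ≤ x → g x = g a + ∫ t in a..x, g' t)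
    {x : ℝ} (hx : a ≤ x) : g x = g a + ∫ t in a..x, (Ioi a).indicator g' t := by
  rw [hg x hx, intervalIntegral.integral_of_le hx, intervalIntegral.integral_of_le hx,
    setIntegral_indicator measurableSet_Ioi, inter_eq_left.mpr Ioc_subset_Ioi_self]

lemma continuousOn_Ici_of_eq_add_integral
    (hg : ∀ x : ℝ, a ≤ x → g x = g a + ∫ t in a..x, g' t) (hg' : IntegrableOn g' (Ioi a)) :
    ContinuousOn g (Ici a) :=
  (continuous_const.add ((hg'.integrable_indicator measurableSet_Ioi).continuous_primitive
    a)).continuousOn.congr fun _ hx => eq_add_integral_indicator_Ioi hg hx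

lemma ae_hasDerivAt_of_eq_add_integral
    (hg : ∀ x : ℝ, a ≤ x → g x = g a + ∫ t in a..x, g' t) (hg' : IntegrableOn g' (Ioi a)) :
    ∀ᵐ x, a ≤ x → HasDerivAt g (g' x) x := by
  have hne : ∀ᵐ x : ℝ, x ≠ a := by simp [ae_iff, measure_singleton]
  filter_upwards [LocallyIntegrable.ae_hasDerivAt_integral
    (hg'.integrable_indicator measurableSet_Ioi).locallyIntegrable, hne] with x hderiv hxa hax
  have hax : a < x := lt_of_le_of_ne hax (Ne.symm hxa)
  have h := (hderiv a).const_add (g a)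
  rw [indicator_of_mem (mem_Ioi.2 hax)] at h
  refine h.congr_of_eventuallyEq ?_
  filter_upwards [eventually_gt_nhds hax] with y hy using eq_add_integral_indicator_Ioi hg hy.le

lemma le_add_integral_abs_of_eq_add_integral
    (hg : ∀ x : ℝ, a ≤ x → g x = g a + ∫ t in a..x, g' t) (hg' : IntegrableOn g' (Ioi a))
    {x : ℝ} (hx : a ≤ x) : g x ≤ g a + ∫ t in Ioi a, |g' t| := by
  rw [hg x hx, intervalIntegral.integral_of_le hx]
  gcongr
  calc ∫ t in Ioc a x, g' t ≤ |∫ t in Ioc a x, g' t| := le_abs_self _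
    _ ≤ ∫ t in Ioc a x, |g' t| := abs_integral_le_integral_abs
    _ ≤ ∫ t in Ioi a, |g' t| :=
        setIntegral_mono_set hg'.abs (Eventually.of_forall fun _ => abs_nonneg _)
          Ioc_subset_Ioi_self.eventuallyLE

end IntegralRepresentation

lemma exists_pos_le_of_continuousOn_Ici_of_tendsto {f : ℝ → ℝ} {a l : ℝ}
    (hf : ContinuousOn f (Ici a)) (hpos : ∀ x : ℝ, a ≤ x → 0 < f x) (hl : 0 < l)
    (hlim : Tendsto f atTop (𝓝 l)) : ∃ m : ℝ, 0 < m ∧ ∀ x : ℝ, a ≤ x → m ≤ f x := by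
  obtain ⟨R, hR⟩ := eventually_atTop.mp (hlim.eventually (eventually_gt_nhds (half_lt_self hl)))
  obtain ⟨y, hy, hmin⟩ := isCompact_Icc.exists_isMinOn (nonempty_Icc.2 (le_max_left a R))
    (hf.mono Icc_subset_Ici_self)
  refine ⟨min (l / 2) (f y), lt_min (half_pos hl) (hpos y hy.1), fun x hx => ?_⟩
  rcases le_total x (max a R) with hxR | hxR
  · exact (min_le_right _ _).trans (hmin ⟨hx, hxR⟩)
  · exact (min_le_left _ _).trans (hR x ((le_max_right a R).trans hxR)).le

section OfRealSub

variable {z : ℂ} {r : ℝ}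

lemma half_norm_le_norm_ofReal_sub (hr : |r| ≤ ‖z‖ / 2) : ‖z‖ / 2 ≤ ‖(r : ℂ) - z‖ := by
  have := norm_sub_norm_le z (r : ℂ)
  rw [norm_sub_rev, Complex.norm_real, Real.norm_eq_abs] at this
  linarith

lemma norm_ofReal_sub_le (hr : |r| ≤ ‖z‖ / 2) : ‖(r : ℂ) - z‖ ≤ 3 / 2 * ‖z‖ := by
  have := norm_sub_le (r : ℂ) z
  rw [Complex.norm_real, Real.norm_eq_abs] at this
  linarith

lemma ofReal_sub_mem_slitPlane (hz : ∀ t : ℝ, 0 ≤ t → (t : ℂ) ≠ z) (hr : |r| ≤ ‖z‖ / 2) :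
    (r : ℂ) - z ∈ Complex.slitPlane := by
  rw [Complex.mem_slitPlane_iff_not_le_zero]
  intro hle
  obtain ⟨hre, him⟩ := Complex.le_def.1 hle
  simp only [Complex.sub_re, Complex.ofReal_re, Complex.zero_re, Complex.sub_im,
    Complex.ofReal_im, Complex.zero_im, zero_sub, neg_eq_zero] at hre him
  have hz_real : (z.re : ℂ) = z := Complex.ext rfl (by simp [him])
  have hz_neg : z.re < 0 := not_le.1 fun h => hz z.re h hz_real
  rw [← hz_real, Complex.norm_real, Real.norm_eq_abs, abs_of_neg hz_neg] at hr
  have := abs_le.1 hr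
  linarith

lemma div_ofReal_mem_slitPlane {w : ℂ} {s : ℝ} (hw : w ∈ Complex.slitPlane) (hs : 0 < s) :
    w / s ∈ Complex.slitPlane := by
  rw [Complex.mem_slitPlane_iff, Complex.div_ofReal_re, Complex.div_ofReal_im] at *
  exact hw.imp (fun h => div_pos h hs) fun h => div_ne_zero h hs.ne'

lemma norm_quotient_deriv_le {p p' q q' m M K : ℝ} (hm : 0 < m) (hmp : m ≤ p)
    (hpM : p ≤ M) (hqK : ‖(q : ℂ) - z‖ ≤ K) :
    ‖((q' : ℂ) * p - ((q : ℂ) - z) * p') / (p : ℂ) ^ 2‖ ≤ max M K / m ^ 2 * (|p'| + |q'|) := by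
  have hp : 0 < p := hm.trans_le hmp
  rw [norm_div, norm_pow, Complex.norm_real, Real.norm_eq_abs, abs_of_pos hp, div_mul_eq_mul_div]
  have hMK : 0 ≤ max M K := (hp.le.trans hpM).trans (le_max_left _ _)
  refine div_le_div₀ (by positivity) ?_ (by positivity) (pow_le_pow_left₀ hm.le hmp 2)
  calc ‖(q' : ℂ) * p - ((q : ℂ) - z) * p'‖
      ≤ |q'| * p + ‖(q : ℂ) - z‖ * |p'| := by
        refine (norm_sub_le _ _).trans_eq ?_
        simp only [norm_mul, Complex.norm_real, Real.norm_eq_abs, abs_of_pos hp]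
    _ ≤ |q'| * max M K + max M K * |p'| := by
        gcongr
        exacts [hpM.trans (le_max_left _ _), hqK.trans (le_max_right _ _)]
    _ = max M K * (|p'| + |q'|) := by ring

end OfRealSub

section Omega

variable {p p' q q' : ℝ → ℝ} {z : ℂ} {x m M : ℝ}

lemma norm_omg (hp : 0 < p x) :
    ‖omg p q z x‖ = (‖(q x : ℂ) - z‖ / p x) ^ (1 / 2 : ℝ) := by
  rw [omg, show (1 / 2 : ℂ) = ((1 / 2 : ℝ) : ℂ) by norm_num, Complex.norm_cpow_real, norm_div,
    Complex.norm_real, Real.norm_eq_abs, abs_of_pos hp]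

lemma norm_omg_mem_Icc (hm : 0 < m) (hmp : m ≤ p x) (hpM : p x ≤ M) (hq : |q x| ≤ ‖z‖ / 2) :
    ‖omg p q z x‖ ∈ Icc ((‖z‖ / 2 / M) ^ (1 / 2 : ℝ)) ((3 / 2 * ‖z‖ / m) ^ (1 / 2 : ℝ)) := by
  have hp : 0 < p x := hm.trans_le hmp
  rw [norm_omg hp]
  exact ⟨Real.rpow_le_rpow (div_nonneg (by positivity) (hp.le.trans hpM))
      (div_le_div₀ (norm_nonneg _) (half_norm_le_norm_ofReal_sub hq) hp hpM) (by norm_num),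
    Real.rpow_le_rpow (by positivity)
      (div_le_div₀ (by positivity) (norm_ofReal_sub_le hq) hm hmp) (by norm_num)⟩

def omgDeriv (p p' q q' : ℝ → ℝ) (z : ℂ) (x : ℝ) : ℂ :=
  ((q' x : ℂ) * p x - ((q x : ℂ) - z) * p' x) / (p x : ℂ) ^ 2 / (2 * omg p q z x)

lemma hasDerivAt_omg (hp : HasDerivAt p (p' x) x) (hq : HasDerivAt q (q' x) x) (hpx : 0 < p x)
    (hslit : ((q x : ℂ) - z) / (p x : ℂ) ∈ Complex.slitPlane) :
    HasDerivAt (omg p q z) (omgDeriv p p' q q' z x) x := by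
  have hquot := (hq.ofReal_comp.sub_const z).div hp.ofReal_comp (by exact_mod_cast hpx.ne')
  have hsqrt := (Complex.hasStrictDerivAt_cpow_const (c := 1 / 2) hslit).hasDerivAt
  refine (hsqrt.comp x hquot).congr_deriv ?_
  rw [show (1 / 2 : ℂ) - 1 = -(1 / 2) by norm_num, Complex.cpow_neg, omgDeriv, omg]
  ring

lemma norm_omgDeriv_le {c K : ℝ} (hc : 0 < c) (hcω : c ≤ ‖omg p q z x‖) (hm : 0 < m)
    (hmp : m ≤ p x) (hpM : p x ≤ M) (hqK : ‖(q x : ℂ) - z‖ ≤ K) :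
    ‖omgDeriv p p' q q' z x‖ ≤ max M K / m ^ 2 / (2 * c) * (|p' x| + |q' x|) := by
  have hMK : 0 ≤ max M K := ((hm.trans_le hmp).le.trans hpM).trans (le_max_left _ _)
  rw [omgDeriv, norm_div, norm_mul, Complex.norm_two, div_mul_eq_mul_div]
  exact div_le_div₀ (by positivity) (norm_quotient_deriv_le hm hmp hpM hqK) (by positivity)
    (by gcongr)

end Omega

namespace PQData

variable {p p' q q' : ℝ → ℝ} {p₀ x₀ : ℝ}

lemma exists_pos_le_p (h : PQData p p' q q' p₀ x₀) {a : ℝ} (ha : 0 ≤ a) :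
    ∃ m : ℝ, 0 < m ∧ ∀ x : ℝ, a ≤ x → m ≤ p x :=
  exists_pos_le_of_continuousOn_Ici_of_tendsto
    ((continuousOn_Ici_of_eq_add_integral h.p_ac h.p'_int).mono (Ici_subset_Ici.2 ha))
    (fun x hx => h.p_pos x (ha.trans hx)) h.hp₀ h.p_lim

lemma p_le (h : PQData p p' q q' p₀ x₀) {x : ℝ} (hx : 0 ≤ x) :
    p x ≤ p 0 + ∫ t in Ioi 0, |p' t| :=
  le_add_integral_abs_of_eq_add_integral h.p_ac h.p'_int hx

lemma ae_hasDerivAt_p (h : PQData p p' q q' p₀ x₀) : ∀ᵐ x, 0 ≤ x → HasDerivAt p (p' x) x :=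
  ae_hasDerivAt_of_eq_add_integral h.p_ac h.p'_int

lemma ae_hasDerivAt_q (h : PQData p p' q q' p₀ x₀) : ∀ᵐ x, x₀ ≤ x → HasDerivAt q (q' x) x :=
  ae_hasDerivAt_of_eq_add_integral h.q_ac h.q'_int

lemma integrableOn_abs_add_abs (h : PQData p p' q q' p₀ x₀) {a : ℝ} (ha : x₀ ≤ a) :
    IntegrableOn (fun x => |p' x| + |q' x|) (Ioi a) :=
  (h.p'_int.mono_set (Ioi_subset_Ioi (h.hx₀.trans ha))).abs.add
    (h.q'_int.mono_set (Ioi_subset_Ioi ha)).abs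

end PQData

/-- For `z ∈ ℂ \ [0,∞)` there are constants `0 < c ≤ C < ∞` with
`c ≤ |ω(x,z)| ≤ C` for all `x ≥ x₁(z)`, `|∂ω/∂x(x,z)| ≤ C(|p'(x)| + |q'(x)|)` for a.e.
`x ≥ x₁(z)`, and `∂ω/∂x(·,z)` is integrable on `(x₁(z),∞)`. -/
theorem statement0 (p p' q q' : ℝ → ℝ) (p₀ x₀ : ℝ)
    (hPQ : PQData p p' q q' p₀ x₀)
    (z : ℂ) (hz : ∀ t : ℝ, 0 ≤ t → (t : ℂ) ≠ z)
    (x₁ : ℝ) (hx₁ : x₀ ≤ x₁) (hx₁q : ∀ x : ℝ, x₁ ≤ x → |q x| ≤ ‖z‖ / 2) :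
    ∃ (c C : ℝ) (ω' : ℝ → ℂ), 0 < c ∧ c ≤ C ∧
      (∀ x : ℝ, x₁ ≤ x → c ≤ ‖omg p q z x‖ ∧ ‖omg p q z x‖ ≤ C) ∧
      (∀ᵐ x ∂(volume : Measure ℝ), x₁ ≤ x → HasDerivAt (omg p q z) (ω' x) x) ∧
      (∀ᵐ x ∂(volume : Measure ℝ), x₁ ≤ x → ‖ω' x‖ ≤ C * (|p' x| + |q' x|)) ∧
      IntegrableOn ω' (Ioi x₁) := by
  have hx₁0 : 0 ≤ x₁ := hPQ.hx₀.trans hx₁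
  obtain ⟨m, hm, hmp⟩ := hPQ.exists_pos_le_p hx₁0
  set M := p 0 + ∫ t in Ioi 0, |p' t|
  have hpM : ∀ x, x₁ ≤ x → p x ≤ M := fun x hx => hPQ.p_le (hx₁0.trans hx)
  have hM : 0 < M := (hm.trans_le (hmp x₁ le_rfl)).trans_le (hpM x₁ le_rfl)
  have hz0 : 0 < ‖z‖ := norm_pos_iff.2 fun h => hz 0 le_rfl (by simp [h])
  set c := (‖z‖ / 2 / M) ^ (1 / 2 : ℝ)
  set C := max ((3 / 2 * ‖z‖ / m) ^ (1 / 2 : ℝ)) (max M (3 / 2 * ‖z‖) / m ^ 2 / (2 * c))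
  have hc : 0 < c := by positivity
  have hnorm : ∀ x, x₁ ≤ x → c ≤ ‖omg p q z x‖ ∧ ‖omg p q z x‖ ≤ C := fun x hx =>
    have h := norm_omg_mem_Icc hm (hmp x hx) (hpM x hx) (hx₁q x hx)
    ⟨h.1, h.2.trans (le_max_left _ _)⟩
  have hderiv : ∀ᵐ x, x₁ ≤ x → HasDerivAt (omg p q z) (omgDeriv p p' q q' z x) x := by
    filter_upwards [hPQ.ae_hasDerivAt_p, hPQ.ae_hasDerivAt_q] with x hpx hqx hx
    have hp : 0 < p x := hm.trans_le (hmp x hx)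
    exact hasDerivAt_omg (hpx (hx₁0.trans hx)) (hqx (hx₁.trans hx)) hp
      (div_ofReal_mem_slitPlane (ofReal_sub_mem_slitPlane hz (hx₁q x hx)) hp)
  have hbound : ∀ᵐ x, x₁ ≤ x → ‖deriv (omg p q z) x‖ ≤ C * (|p' x| + |q' x|) := by
    filter_upwards [hderiv] with x hω hx
    rw [(hω hx).deriv]
    refine (norm_omgDeriv_le hc (hnorm x hx).1 hm (hmp x hx) (hpM x hx)
      (norm_ofReal_sub_le (hx₁q x hx))).trans ?_
    gcongr
    exact le_max_right _ _
  refine ⟨c, C, deriv (omg p q z), hc, (hnorm x₁ le_rfl).1.trans (hnorm x₁ le_rfl).2, hnorm, ?_,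
    hbound, ?_⟩
  · filter_upwards [hderiv] with x hω hx using (hω hx).differentiableAt.hasDerivAt
  · refine ((hPQ.integrableOn_abs_add_abs hx₁).const_mul C).mono'
      (measurable_deriv _).aestronglyMeasurable ?_
    filter_upwards [ae_restrict_mem measurableSet_Ioi, ae_restrict_of_ae hbound] with x hx h
      using h hx.le
end
end

section
/- Let λ > 0 and let θ be a solution of the Schrödinger equation with spectral parameter λ on [0,∞) satisfying θ(x)·exp(−iΦ(x,λ)) → K(λ) and θ'(x)·exp(−iΦ(x,λ)) → i√(λ/p₀)·K(λ) as x → ∞. Then for every x ≥ 0 one has p(x)·(θ'(x)·conj(θ(x)) − θ(x)·conj(θ'(x))) = 2i√(p₀λ)·K(λ)². -/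
/-!
For real `λ` the function `conj θ` solves the same equation as `θ`, so the Wronskian
`p (θ' conj θ - θ conj θ')` of the pair is constant on `[0, ∞)`; since `p θ'` is only absolutely
continuous, this is proved by integration by parts for primitives of integrable functions
(Fubini on a triangle). The phase `exp (-iΦ)` has modulus one and cancels in the Wronskian, so the
prescribed asymptotics give its value at infinity, `p₀ · 2i√(λ/p₀) K² = 2i√(p₀λ) K²`.
-/

open MeasureTheory Filter Set Complex

noncomputable section

open ComplexConjugate

theorem integral_mul_integral_eq_integral_mul_primitive_add {𝕜 : Type*} [RCLike 𝕜]
    {f g : ℝ → 𝕜} {a b : ℝ} (hab : a ≤ b)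
    (hf : IntervalIntegrable f volume a b) (hg : IntervalIntegrable g volume a b) :
    (∫ t in a..b, f t) * (∫ t in a..b, g t)
      = ∫ t in a..b, (f t * (∫ s in a..t, g s) + (∫ s in a..t, f s) * g t) := by
  set μ := volume.restrict (Ioc a b)
  set P : ℝ × ℝ → 𝕜 := fun z => f z.1 * g z.2
  set D : Set (ℝ × ℝ) := {z | z.2 ≤ z.1}
  have hP : Integrable P (μ.prod μ) := hf.1.mul_prod hg.1
  have hD : MeasurableSet D := measurableSet_le measurable_snd measurable_fst
  have lower : ∫ z in D, P z ∂μ.prod μ = ∫ t in a..b, f t * ∫ s in a..t, g s := by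
    rw [← integral_indicator hD, integral_prod _ (hP.indicator hD),
      intervalIntegral.integral_of_le hab]
    refine setIntegral_congr_fun measurableSet_Ioc fun t ht => ?_
    have : (fun s => D.indicator P (t, s)) = (Iic t).indicator (fun s => f t * g s) := by
      ext s; by_cases hst : s ≤ t <;> simp [D, P, hst]
    rw [this, setIntegral_indicator measurableSet_Iic, integral_const_mul,
      intervalIntegral.integral_of_le ht.1.le, Ioc_inter_Iic, min_eq_right ht.2]
  have upper : ∫ z in Dᶜ, P z ∂μ.prod μ = ∫ t in a..b, (∫ s in a..t, f s) * g t := by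
    rw [← integral_indicator hD.compl, integral_prod_symm _ (hP.indicator hD.compl),
      intervalIntegral.integral_of_le hab]
    refine setIntegral_congr_fun measurableSet_Ioc fun t ht => ?_
    have : (fun s => Dᶜ.indicator P (s, t)) = (Iio t).indicator (fun s => f s * g t) := by
      ext s; by_cases hst : s < t <;> simp [D, P, hst]
    rw [this, setIntegral_indicator measurableSet_Iio, integral_mul_const,
      intervalIntegral.integral_of_le ht.1.le, integral_Ioc_eq_integral_Ioo,
      show Ioc a b ∩ Iio t = Ioo a t from ext fun s => ⟨fun hs => ⟨hs.1.1, hs.2⟩,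
        fun hs => ⟨⟨hs.1, hs.2.le.trans ht.2⟩, hs.2⟩⟩]
  have hF : ContinuousOn (fun t => ∫ s in a..t, f s) (uIcc a b) :=
    intervalIntegral.continuousOn_primitive_interval' hf left_mem_uIcc
  have hG : ContinuousOn (fun t => ∫ s in a..t, g s) (uIcc a b) :=
    intervalIntegral.continuousOn_primitive_interval' hg left_mem_uIcc
  rw [intervalIntegral.integral_add (hf.mul_continuousOn hG) (hg.continuousOn_mul hF),
    ← lower, ← upper, integral_add_compl hD hP, integral_prod_mul,
    intervalIntegral.integral_of_le hab, intervalIntegral.integral_of_le hab]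

theorem integral_deriv_mul_eq_sub_of_eq_add_primitive {𝕜 : Type*} [RCLike 𝕜]
    {u u' v v' : ℝ → 𝕜} {a b : ℝ} (hab : a ≤ b)
    (hu' : IntervalIntegrable u' volume a b) (hv' : IntervalIntegrable v' volume a b)
    (hu : ∀ t ∈ Icc a b, u t = u a + ∫ s in a..t, u' s)
    (hv : ∀ t ∈ Icc a b, v t = v a + ∫ s in a..t, v' s) :
    ∫ t in a..b, (u' t * v t + u t * v' t) = u b * v b - u a * v a := by
  set U := fun t => ∫ s in a..t, u' s
  set V := fun t => ∫ s in a..t, v' s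
  have hU : ContinuousOn U (uIcc a b) :=
    intervalIntegral.continuousOn_primitive_interval' hu' left_mem_uIcc
  have hV : ContinuousOn V (uIcc a b) :=
    intervalIntegral.continuousOn_primitive_interval' hv' left_mem_uIcc
  calc ∫ t in a..b, (u' t * v t + u t * v' t)
      = ∫ t in a..b, ((u' t * v a + u a * v' t) + (u' t * V t + U t * v' t)) := by
        refine intervalIntegral.integral_congr fun t ht => ?_
        rw [uIcc_of_le hab] at ht
        simp only [hu t ht, hv t ht]
        ring
    _ = (U b * v a + u a * V b) + U b * V b := by
        rw [intervalIntegral.integral_add ((hu'.mul_const _).add (hv'.const_mul _))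
            (hu'.mul_continuousOn hV |>.add (hv'.continuousOn_mul hU)),
          intervalIntegral.integral_add (hu'.mul_const _) (hv'.const_mul _),
          intervalIntegral.integral_mul_const, intervalIntegral.integral_const_mul,
          integral_mul_integral_eq_integral_mul_primitive_add hab hu' hv']
    _ = u b * v b - u a * v a := by
        rw [hu b ⟨hab, le_rfl⟩, hv b ⟨hab, le_rfl⟩]
        ring

theorem IntervalIntegrable.conj {𝕜 : Type*} [RCLike 𝕜] {f : ℝ → 𝕜} {a b : ℝ}
    (hf : IntervalIntegrable f volume a b) : IntervalIntegrable (fun t => conj (f t)) volume a b :=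
  ⟨(RCLike.conjCLE (K := 𝕜)).toContinuousLinearMap.integrable_comp hf.1,
    (RCLike.conjCLE (K := 𝕜)).toContinuousLinearMap.integrable_comp hf.2⟩

theorem IntervalIntegrable.ofReal {𝕜 : Type*} [RCLike 𝕜] {f : ℝ → ℝ} {a b : ℝ}
    (hf : IntervalIntegrable f volume a b) : IntervalIntegrable (fun t => (f t : 𝕜)) volume a b :=
  ⟨hf.1.ofReal, hf.2.ofReal⟩

theorem conj_eq_add_primitive {𝕜 : Type*} [RCLike 𝕜] {u u' : ℝ → 𝕜} {a t : ℝ}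
    (hu : u t = u a + ∫ s in a..t, u' s) :
    conj (u t) = conj (u a) + ∫ s in a..t, conj (u' s) := by
  rw [hu, map_add, intervalIntegral.intervalIntegral_conj]

theorem continuousOn_of_eq_add_primitive {E : Type*} [NormedAddCommGroup E] [NormedSpace ℝ E]
    {f f' : ℝ → E} {a b : ℝ} (hf' : IntervalIntegrable f' volume a b)
    (hf : ∀ t ∈ uIcc a b, f t = f a + ∫ s in a..t, f' s) : ContinuousOn f (uIcc a b) :=
  (continuousOn_const.add
    (intervalIntegral.continuousOn_primitive_interval' hf' left_mem_uIcc)).congr hf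

theorem exp_neg_I_mul_ofReal_mul_conj (φ : ℝ) :
    exp (-(I * φ)) * conj (exp (-(I * φ))) = 1 := by
  rw [← exp_conj, ← exp_add, map_neg, map_mul, conj_I, conj_ofReal]
  simp

theorem mul_sqrt_div_eq_sqrt_mul {a : ℝ} (ha : 0 < a) (x : ℝ) :
    a * Real.sqrt (x / a) = Real.sqrt (a * x) := by
  rw [show a * x = a ^ 2 * (x / a) by field_simp, Real.sqrt_mul (sq_nonneg a),
    Real.sqrt_sq ha.le]

def conjWronskian (p : ℝ → ℝ) (f f' : ℝ → ℂ) (x : ℝ) : ℂ :=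
  (p x : ℂ) * (f' x * conj (f x) - f x * conj (f' x))

theorem tendsto_conjWronskian {p : ℝ → ℝ} {p₀ : ℝ} {f f' : ℝ → ℂ} {φ : ℝ → ℝ} {A B : ℂ}
    (hp : Tendsto p atTop (nhds p₀))
    (hf : Tendsto (fun x => f x * exp (-(I * φ x))) atTop (nhds A))
    (hf' : Tendsto (fun x => f' x * exp (-(I * φ x))) atTop (nhds B)) :
    Tendsto (conjWronskian p f f') atTop (nhds (p₀ * (B * conj A - A * conj B))) := by
  refine (hp.ofReal.mul ((hf'.mul hf.star).sub (hf.mul hf'.star))).congr fun x => ?_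
  have he := exp_neg_I_mul_ofReal_mul_conj (φ x)
  simp only [conjWronskian, Complex.star_def, map_mul]
  linear_combination ((p x : ℂ) * (f' x * conj (f x) - f x * conj (f' x))) * he

section Schrodinger

variable {p p' q q' : ℝ → ℝ} {p₀ x₀ : ℝ}

theorem PQData.continuousOn_p (hPQ : PQData p p' q q' p₀ x₀) {b : ℝ} (hb : 0 ≤ b) :
    ContinuousOn p (Icc 0 b) := by
  rw [← uIcc_of_le hb]
  refine continuousOn_of_eq_add_primitive ?_ fun t ht => hPQ.p_ac t ?_
  · exact (intervalIntegrable_iff_integrableOn_Ioc_of_le hb).2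
      (hPQ.p'_int.mono_set Ioc_subset_Ioi_self)
  · rw [uIcc_of_le hb] at ht
    exact ht.1

theorem PQData.intervalIntegrable_q (hPQ : PQData p p' q q' p₀ x₀) {b : ℝ} (hb : 0 ≤ b) :
    IntervalIntegrable q volume 0 b := by
  set c := max x₀ b
  have hc : x₀ ≤ c := le_max_left _ _
  have near : IntervalIntegrable q volume 0 x₀ :=
    (intervalIntegrable_iff_integrableOn_Ioo_of_le hPQ.hx₀).2 hPQ.q_int
  have far : IntervalIntegrable q volume x₀ c := by
    refine ContinuousOn.intervalIntegrable
      (continuousOn_of_eq_add_primitive (f' := q') ?_ fun t ht => ?_)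
    · exact (intervalIntegrable_iff_integrableOn_Ioc_of_le hc).2
        (hPQ.q'_int.mono_set Ioc_subset_Ioi_self)
    · rw [uIcc_of_le hc] at ht
      exact hPQ.q_ac t ht.1
  refine (near.trans far).mono_set (uIcc_subset_uIcc left_mem_uIcc ?_)
  rw [uIcc_of_le (hPQ.hx₀.trans hc)]
  exact ⟨hb, le_max_right _ _⟩

variable {z : ℂ} {θ θ' : ℝ → ℂ}

theorem IsSol.continuousOn {I : Set ℝ} (hsol : IsSol p q z I θ θ') : ContinuousOn θ I :=
  fun t ht => (hsol.1 t ht).continuousWithinAt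

theorem IsSol.intervalIntegrable_potential_mul (hPQ : PQData p p' q q' p₀ x₀)
    (hsol : IsSol p q z (Ici 0) θ θ') {b : ℝ} (hb : 0 ≤ b) :
    IntervalIntegrable (fun t => ((q t : ℂ) - z) * θ t) volume 0 b := by
  refine ((hPQ.intervalIntegrable_q hb).ofReal.sub intervalIntegrable_const).mul_continuousOn ?_
  exact hsol.continuousOn.mono (by simp [uIcc_of_le hb, Icc_subset_Ici_self])

theorem IsSol.eq_add_integral_potential_mul (hsol : IsSol p q z (Ici 0) θ θ') {t : ℝ}
    (ht : 0 ≤ t) :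
    (p t : ℂ) * θ' t = (p 0 : ℂ) * θ' 0 + ∫ s in 0..t, ((q s : ℂ) - z) * θ s :=
  sub_eq_iff_eq_add'.1 (hsol.2 0 (mem_Ici.2 le_rfl) t ht)

theorem IsSol.continuousOn_deriv (hPQ : PQData p p' q q' p₀ x₀)
    (hsol : IsSol p q z (Ici 0) θ θ') {b : ℝ} (hb : 0 ≤ b) : ContinuousOn θ' (Icc 0 b) := by
  have hg : ContinuousOn (fun t => (p t : ℂ) * θ' t) (Icc 0 b) := by
    rw [← uIcc_of_le hb]
    refine continuousOn_of_eq_add_primitive (hsol.intervalIntegrable_potential_mul hPQ hb)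
      fun t ht => hsol.eq_add_integral_potential_mul ?_
    rw [uIcc_of_le hb] at ht
    exact ht.1
  have hp : ∀ t ∈ Icc 0 b, (p t : ℂ) ≠ 0 := fun t ht => ofReal_ne_zero.2 (hPQ.p_pos t ht.1).ne'
  refine (hg.div (continuous_ofReal.comp_continuousOn (hPQ.continuousOn_p hb)) hp).congr
    fun t ht => ?_
  exact (mul_div_cancel_left₀ _ (hp t ht)).symm

theorem IsSol.eq_add_integral_deriv (hPQ : PQData p p' q q' p₀ x₀)
    (hsol : IsSol p q z (Ici 0) θ θ') {t : ℝ} (ht : 0 ≤ t) :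
    θ t = θ 0 + ∫ s in 0..t, θ' s := by
  rw [intervalIntegral.integral_eq_sub_of_hasDerivAt_of_le ht
    (hsol.continuousOn.mono Icc_subset_Ici_self)
    (fun s hs => (hsol.1 s hs.1.le).hasDerivAt (Ici_mem_nhds hs.1))
    ((hsol.continuousOn_deriv hPQ ht).intervalIntegrable_of_Icc ht)]
  ring

theorem conjWronskian_eq_sub (p : ℝ → ℝ) (f f' : ℝ → ℂ) (x : ℝ) :
    conjWronskian p f f' x = (p x : ℂ) * f' x * conj (f x) - f x * conj ((p x : ℂ) * f' x) := by
  rw [conjWronskian, map_mul, conj_ofReal]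
  ring

theorem IsSol.conjWronskian_eq (hPQ : PQData p p' q q' p₀ x₀) {lam : ℝ}
    (hsol : IsSol p q (lam : ℂ) (Ici 0) θ θ') {b : ℝ} (hb : 0 ≤ b) :
    conjWronskian p θ θ' b = conjWronskian p θ θ' 0 := by
  set g := fun t => (p t : ℂ) * θ' t
  set h := fun t => ((q t : ℂ) - lam) * θ t
  have hh : IntervalIntegrable h volume 0 b := hsol.intervalIntegrable_potential_mul hPQ hb
  have hθ' : IntervalIntegrable θ' volume 0 b :=
    (hsol.continuousOn_deriv hPQ hb).intervalIntegrable_of_Icc hb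
  have hθ : ∀ t ∈ Icc 0 b, θ t = θ 0 + ∫ s in 0..t, θ' s :=
    fun t ht => hsol.eq_add_integral_deriv hPQ ht.1
  have hg : ∀ t ∈ Icc 0 b, g t = g 0 + ∫ s in 0..t, h s :=
    fun t ht => hsol.eq_add_integral_potential_mul ht.1
  have hgθ := integral_deriv_mul_eq_sub_of_eq_add_primitive hb hh hθ'.conj hg
    fun t ht => conj_eq_add_primitive (hθ t ht)
  have hθg := integral_deriv_mul_eq_sub_of_eq_add_primitive hb hθ' hh.conj hθ
    fun t ht => conj_eq_add_primitive (hg t ht)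
  -- `q - λ` and `p` are real, so both integrands are `(q - λ)|θ|² + p|θ'|²`.
  have integrands_eq : (fun t => h t * conj (θ t) + g t * conj (θ' t))
      = fun t => θ' t * conj (g t) + θ t * conj (h t) := by
    ext t
    simp only [g, h, map_mul, map_sub, conj_ofReal]
    ring
  rw [integrands_eq] at hgθ
  rw [conjWronskian_eq_sub, conjWronskian_eq_sub]
  linear_combination hθg - hgθ

end Schrodinger

theorem statement12_general (p p' q q' : ℝ → ℝ) (p₀ x₀ : ℝ)
    (hPQ : PQData p p' q q' p₀ x₀)
    (lam : ℝ)
    (θ θ' : ℝ → ℂ)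
    (hsol : IsSol p q (lam : ℂ) (Ici 0) θ θ')
    (hl : Tendsto (fun x => θ x * Complex.exp (-(Complex.I * (Phi p q lam x : ℂ))))
      atTop (nhds ((Kc p q lam : ℂ))))
    (hl' : Tendsto (fun x => θ' x * Complex.exp (-(Complex.I * (Phi p q lam x : ℂ))))
      atTop (nhds (Complex.I * (Real.sqrt (lam / p₀) : ℂ) * (Kc p q lam : ℂ)))) :
    ∀ x : ℝ, 0 ≤ x →
      (p x : ℂ) * (θ' x * (starRingEnd ℂ) (θ x) - θ x * (starRingEnd ℂ) (θ' x))
        = 2 * Complex.I * (Real.sqrt (p₀ * lam) : ℂ) * (Kc p q lam : ℂ) ^ 2 := by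
  intro x hx
  have hconst : (fun _ => conjWronskian p θ θ' x) =ᶠ[atTop] conjWronskian p θ θ' := by
    filter_upwards [eventually_ge_atTop 0] with t ht
    rw [hsol.conjWronskian_eq hPQ hx, hsol.conjWronskian_eq hPQ ht]
  have hlim := tendsto_nhds_unique (tendsto_const_nhds.congr' hconst)
    (tendsto_conjWronskian hPQ.p_lim hl hl')
  rw [← conjWronskian, hlim, ← mul_sqrt_div_eq_sqrt_mul hPQ.hp₀]
  simp only [map_mul, conj_I, conj_ofReal, ofReal_mul]
  ring

/-- a solution `θ` with the asymptotics `θ(x) e^{−iΦ} → K(λ)`,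
`θ'(x) e^{−iΦ} → i√(λ/p₀)K(λ)` satisfies
`p(x)(θ'(x) conj θ(x) − θ(x) conj θ'(x)) = 2i√(p₀λ) K(λ)²` for every `x ≥ 0`. -/
theorem statement12 (p p' q q' : ℝ → ℝ) (p₀ x₀ : ℝ)
    (hPQ : PQData p p' q q' p₀ x₀)
    (lam : ℝ) (hlam : 0 < lam)
    (θ θ' : ℝ → ℂ)
    (hsol : IsSol p q (lam : ℂ) (Ici 0) θ θ')
    (hl : Tendsto (fun x => θ x * Complex.exp (-(Complex.I * (Phi p q lam x : ℂ))))
      atTop (nhds ((Kc p q lam : ℂ))))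
    (hl' : Tendsto (fun x => θ' x * Complex.exp (-(Complex.I * (Phi p q lam x : ℂ))))
      atTop (nhds (Complex.I * (Real.sqrt (lam / p₀) : ℂ) * (Kc p q lam : ℂ)))) :
    ∀ x : ℝ, 0 ≤ x →
      (p x : ℂ) * (θ' x * (starRingEnd ℂ) (θ x) - θ x * (starRingEnd ℂ) (θ' x))
        = 2 * Complex.I * (Real.sqrt (p₀ * lam) : ℂ) * (Kc p q lam : ℂ) ^ 2 :=
  statement12_general p p' q q' p₀ x₀ hPQ lam θ θ' hsol hl hl'

end
end

section
/- Let λ > 0, p₀ > 0, K₁ > 0, K₂ > 0 be real constants, and let θ₁, θ₂ be complex-valued solutions on ℝ of the Schrödinger equation with spectral parameter λ (so conj(θ₁) and conj(θ₂) are also solutions). For solutions f, g write {f,g} for the (constant) Wronskian p(x)(f'(x)g(x) − f(x)g'(x)). Assume {θ₁, conj(θ₁)} = 2i√(p₀λ)·K₁² and {θ₂, conj(θ₂)} = −2i√(p₀λ)·K₂², and set w = {θ₂, θ₁} and 𝐰 = {θ₂, conj(θ₁)}. Then |w|² = 4p₀λ·K₁²·K₂² + |𝐰|². -/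
open MeasureTheory Filter Set Complex

noncomputable section

/-- With `a, a'`, `b, b'` the values of `θ₁, θ₁'`, `θ₂, θ₂'` at a point, this is the relation
`|{θ₂,θ₁}|² − |{θ₂,θ̄₁}|² = {θ₂,θ̄₂}·{θ₁,θ̄₁}`. -/
theorem norm_sq_wronskian_sub_norm_sq_wronskian_conj (p : ℝ) (a a' b b' : ℂ) :
    ((‖(p : ℂ) * (b' * a - b * a')‖ ^ 2
        - ‖(p : ℂ) * (b' * (starRingEnd ℂ) a - b * (starRingEnd ℂ) a')‖ ^ 2 : ℝ) : ℂ)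
      = (p : ℂ) * (b' * (starRingEnd ℂ) b - b * (starRingEnd ℂ) b')
        * ((p : ℂ) * (a' * (starRingEnd ℂ) a - a * (starRingEnd ℂ) a')) := by
  push_cast
  simp only [← Complex.mul_conj', map_mul, map_sub, Complex.conj_conj, Complex.conj_ofReal]
  ring

/-- The constancy of each Wronskian is encoded by requiring its value at every `x`. -/
theorem statement19_general (p : ℝ → ℝ)
    (lam p₀ K₁ K₂ : ℝ)
    (hlam : 0 < lam) (hp₀ : 0 < p₀)
    (θ₁ θ₁' θ₂ θ₂' : ℝ → ℂ)
    (w bw : ℂ)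
    (hW₁ : ∀ x : ℝ,
      (p x : ℂ) * (θ₁' x * (starRingEnd ℂ) (θ₁ x) - θ₁ x * (starRingEnd ℂ) (θ₁' x))
        = 2 * Complex.I * (Real.sqrt (p₀ * lam) : ℂ) * (K₁ : ℂ) ^ 2)
    (hW₂ : ∀ x : ℝ,
      (p x : ℂ) * (θ₂' x * (starRingEnd ℂ) (θ₂ x) - θ₂ x * (starRingEnd ℂ) (θ₂' x))
        = -(2 * Complex.I * (Real.sqrt (p₀ * lam) : ℂ) * (K₂ : ℂ) ^ 2))
    (hw : ∀ x : ℝ, (p x : ℂ) * (θ₂' x * θ₁ x - θ₂ x * θ₁' x) = w)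
    (hbw : ∀ x : ℝ,
      (p x : ℂ) * (θ₂' x * (starRingEnd ℂ) (θ₁ x) - θ₂ x * (starRingEnd ℂ) (θ₁' x))
        = bw) :
    ‖w‖ ^ 2 = 4 * p₀ * lam * K₁ ^ 2 * K₂ ^ 2 + ‖bw‖ ^ 2 := by
  have hrel := norm_sq_wronskian_sub_norm_sq_wronskian_conj (p 0) (θ₁ 0) (θ₁' 0) (θ₂ 0) (θ₂' 0)
  rw [hw 0, hbw 0, hW₁ 0, hW₂ 0] at hrel
  have hsqrt : (Real.sqrt (p₀ * lam) : ℂ) ^ 2 = ((p₀ * lam : ℝ) : ℂ) := by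
    rw [← Complex.ofReal_pow, Real.sq_sqrt (by positivity)]
  have hdiff : ((‖w‖ ^ 2 - ‖bw‖ ^ 2 : ℝ) : ℂ) = ((4 * p₀ * lam * K₁ ^ 2 * K₂ ^ 2 : ℝ) : ℂ) := by
    rw [hrel]
    push_cast at hsqrt ⊢
    linear_combination (4 * (K₁ : ℂ) ^ 2 * (K₂ : ℂ) ^ 2) * hsqrt
      - 4 * (Real.sqrt (p₀ * lam) : ℂ) ^ 2 * (K₁ : ℂ) ^ 2 * (K₂ : ℂ) ^ 2 * Complex.I_sq
  linarith [Complex.ofReal_injective hdiff]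

/-- the identity `|w|² = 4p₀λK₁²K₂² + |𝐰|²` for the Wronskians
`{θ₁, conj θ₁} = 2i√(p₀λ)K₁²`, `{θ₂, conj θ₂} = −2i√(p₀λ)K₂²`, `w = {θ₂,θ₁}`,
`𝐰 = {θ₂, conj θ₁}` of solutions on the whole line of the Schrödinger equation with
spectral parameter `λ > 0`. The Wronskian `{f,g} = p(x)(f'(x)g(x) − f(x)g'(x))` of two
solutions is constant; this is encoded by requiring the stated values at every `x`. -/
theorem statement19 (p q : ℝ → ℝ)
    (hp : Continuous p) (hppos : ∀ x : ℝ, 0 < p x)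
    (hq : MeasureTheory.LocallyIntegrable q)
    (lam p₀ K₁ K₂ : ℝ)
    (hlam : 0 < lam) (hp₀ : 0 < p₀) (hK₁ : 0 < K₁) (hK₂ : 0 < K₂)
    (θ₁ θ₁' θ₂ θ₂' : ℝ → ℂ)
    (h₁ : IsSol p q (lam : ℂ) Set.univ θ₁ θ₁')
    (h₂ : IsSol p q (lam : ℂ) Set.univ θ₂ θ₂')
    (w bw : ℂ)
    (hW₁ : ∀ x : ℝ,
      (p x : ℂ) * (θ₁' x * (starRingEnd ℂ) (θ₁ x) - θ₁ x * (starRingEnd ℂ) (θ₁' x))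
        = 2 * Complex.I * (Real.sqrt (p₀ * lam) : ℂ) * (K₁ : ℂ) ^ 2)
    (hW₂ : ∀ x : ℝ,
      (p x : ℂ) * (θ₂' x * (starRingEnd ℂ) (θ₂ x) - θ₂ x * (starRingEnd ℂ) (θ₂' x))
        = -(2 * Complex.I * (Real.sqrt (p₀ * lam) : ℂ) * (K₂ : ℂ) ^ 2))
    (hw : ∀ x : ℝ, (p x : ℂ) * (θ₂' x * θ₁ x - θ₂ x * θ₁' x) = w)
    (hbw : ∀ x : ℝ,
      (p x : ℂ) * (θ₂' x * (starRingEnd ℂ) (θ₁ x) - θ₂ x * (starRingEnd ℂ) (θ₁' x))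
        = bw) :
    ‖w‖ ^ 2 = 4 * p₀ * lam * K₁ ^ 2 * K₂ ^ 2 + ‖bw‖ ^ 2 :=
  statement19_general p lam p₀ K₁ K₂ hlam hp₀ θ₁ θ₁' θ₂ θ₂' w bw hW₁ hW₂ hw hbw
end
end
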